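/- Let φ ∈ C¹((0,∞)) and set ψ(t) = t φ'(t). Suppose φ and ψ are bounded and continuous on (0,∞), and slowly oscillating at ∞ in the sense that for some λ ∈ (0,1), lim_{r→∞} sup_{t,τ∈[λr,r]}|φ(t)−φ(τ)| = 0 and lim_{r→∞} sup_{t,τ∈[λr,r]}|ψ(t)−ψ(τ)| = 0. Then lim_{t→∞} ψ(t) = 0. -/

import Mathlib

/-!
Substituting `t = exp s` turns `φ` into `s ↦ φ (exp s)`, whose derivative is `ψ (exp s)`. On
`[λ r, r]` the function `ψ` stays within `δ` of `ψ r`, so by the mean value inequality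
`φ r - φ (λ r)` is within `δ log λ⁻¹` of `log λ⁻¹ • ψ r`. Slow oscillation of `φ` makes
`φ r - φ (λ r)` small, hence so is `ψ r`.
-/

open Set Filter Topology Real

variable {E : Type*} [NormedAddCommGroup E]

def SlowlyOscillating (lam : ℝ) (f : ℝ → E) : Prop :=
  ∀ ε > 0, ∃ M : ℝ, ∀ r : ℝ, M < r →
    ∀ t ∈ Icc (lam * r) r, ∀ τ ∈ Icc (lam * r) r, ‖f t - f τ‖ < ε

theorem SlowlyOscillating.eventually_norm_sub_lt {lam : ℝ} {f : ℝ → E}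
    (hf : SlowlyOscillating lam f) {ε : ℝ} (hε : 0 < ε) :
    ∀ᶠ r in atTop, ∀ t ∈ Icc (lam * r) r, ∀ τ ∈ Icc (lam * r) r, ‖f t - f τ‖ < ε := by
  obtain ⟨M, hM⟩ := hf ε hε
  filter_upwards [eventually_gt_atTop M] using hM

variable [NormedSpace ℝ E]

theorem norm_sub_sub_log_smul_le {φ φ' : ℝ → E} {a b δ : ℝ} {c : E} (ha : 0 < a) (hab : a ≤ b)
    (hd : ∀ t ∈ Icc a b, HasDerivAt φ (φ' t) t) (hψ : ∀ t ∈ Ico a b, ‖t • φ' t - c‖ ≤ δ) :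
    ‖φ b - φ a - log (b / a) • c‖ ≤ δ * log (b / a) := by
  have hb : 0 < b := ha.trans_le hab
  have hexp_mem : ∀ s ∈ Icc (log a) (log b), exp s ∈ Icc a b := fun s hs =>
    ⟨(log_le_iff_le_exp ha).1 hs.1, (le_log_iff_exp_le hb).1 hs.2⟩
  have hderiv : ∀ s ∈ Icc (log a) (log b),
      HasDerivAt (fun s => φ (exp s) - s • c) (exp s • φ' (exp s) - c) s := fun s hs =>
    (((hd _ (hexp_mem s hs)).scomp s (hasDerivAt_exp s)).sub
      ((hasDerivAt_id s).smul_const c)).congr_deriv (by rw [one_smul])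
  have hbound : ∀ s ∈ Ico (log a) (log b), ‖exp s • φ' (exp s) - c‖ ≤ δ := fun s hs =>
    hψ _ ⟨(log_le_iff_le_exp ha).1 hs.1, (lt_log_iff_exp_lt hb).1 hs.2⟩
  have hmvt := norm_image_sub_le_of_norm_deriv_le_segment'
    (fun s hs => (hderiv s hs).hasDerivWithinAt) hbound (log b) ⟨log_le_log ha hab, le_rfl⟩
  rw [log_div hb.ne' ha.ne', sub_smul]
  simp only [exp_log ha, exp_log hb] at hmvt
  convert hmvt using 2
  abel

theorem tendsto_smul_deriv_atTop_zero_of_slowlyOscillating {lam : ℝ} (hlam : lam ∈ Ioo 0 1)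
    {φ φ' : ℝ → E} (hd : ∀ t > 0, HasDerivAt φ (φ' t) t) (hφ : SlowlyOscillating lam φ)
    (hψ : SlowlyOscillating lam fun t => t • φ' t) :
    Tendsto (fun t => t • φ' t) atTop (𝓝 0) := by
  obtain ⟨hlam0, hlam1⟩ := hlam
  set L := log lam⁻¹
  have hL : 0 < L := log_pos (one_lt_inv₀ hlam0 |>.2 hlam1)
  rw [Metric.tendsto_nhds]
  intro ε hε
  filter_upwards [eventually_gt_atTop 0, hφ.eventually_norm_sub_lt (by positivity : 0 < ε * L / 2),
    hψ.eventually_norm_sub_lt (half_pos hε)] with r hr hφr hψr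
  have hlr : 0 < lam * r := mul_pos hlam0 hr
  have hle : lam * r ≤ r := mul_le_of_le_one_left hr.le hlam1.le
  have hr_mem : r ∈ Icc (lam * r) r := ⟨hle, le_rfl⟩
  have hkey := norm_sub_sub_log_smul_le (c := r • φ' r) hlr hle
    (fun t ht => hd t (hlr.trans_le ht.1)) (fun t ht => (hψr t ⟨ht.1, ht.2.le⟩ r hr_mem).le)
  rw [show r / (lam * r) = lam⁻¹ by field_simp] at hkey
  have hφ_small := hφr r hr_mem (lam * r) ⟨le_rfl, hle⟩
  have hLψ : L * ‖r • φ' r‖ < L * ε := calc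
    L * ‖r • φ' r‖ = ‖L • (r • φ' r)‖ := by rw [norm_smul L, norm_of_nonneg hL.le]
    _ ≤ ‖φ r - φ (lam * r)‖ + ‖L • (r • φ' r) - (φ r - φ (lam * r))‖ :=
      norm_le_insert' _ _
    _ = ‖φ r - φ (lam * r)‖ + ‖φ r - φ (lam * r) - L • (r • φ' r)‖ := by rw [norm_sub_rev (L • _)]
    _ < ε * L / 2 + ε / 2 * L := add_lt_add_of_lt_of_le hφ_small hkey
    _ = L * ε := by ring
  rw [dist_zero_right]
  exact lt_of_mul_lt_mul_left hLψ hL.le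

theorem stmt_17_general (lam : ℝ) (hlam : lam ∈ Set.Ioo (0 : ℝ) 1)
    (φ φ' : ℝ → ℂ)
    (hd : ∀ t > 0, HasDerivAt φ (φ' t) t)
    (hφso : ∀ ε > 0, ∃ M : ℝ, ∀ r : ℝ, M < r →
        ∀ t ∈ Set.Icc (lam * r) r, ∀ τ ∈ Set.Icc (lam * r) r,
          ‖φ t - φ τ‖ < ε)
    (hψso : ∀ ε > 0, ∃ M : ℝ, ∀ r : ℝ, M < r →
        ∀ t ∈ Set.Icc (lam * r) r, ∀ τ ∈ Set.Icc (lam * r) r,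
          ‖(t : ℂ) * φ' t - (τ : ℂ) * φ' τ‖ < ε) :
    Filter.Tendsto (fun t : ℝ => (t : ℂ) * φ' t) Filter.atTop (nhds 0) := by
  simp only [← Complex.real_smul] at hψso ⊢
  exact tendsto_smul_deriv_atTop_zero_of_slowlyOscillating hlam hd hφso hψso

theorem stmt_17 (lam : ℝ) (hlam : lam ∈ Set.Ioo (0 : ℝ) 1)
    (φ φ' : ℝ → ℂ)
    (hd : ∀ t > 0, HasDerivAt φ (φ' t) t)
    (hφb : ∃ C, ∀ t > 0, ‖φ t‖ ≤ C)
    (hψb : ∃ C, ∀ t : ℝ, 0 < t → ‖(t : ℂ) * φ' t‖ ≤ C)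
    (hψc : ContinuousOn (fun t : ℝ => (t : ℂ) * φ' t) (Set.Ioi 0))
    (hφso : ∀ ε > 0, ∃ M : ℝ, ∀ r : ℝ, M < r →
        ∀ t ∈ Set.Icc (lam * r) r, ∀ τ ∈ Set.Icc (lam * r) r,
          ‖φ t - φ τ‖ < ε)
    (hψso : ∀ ε > 0, ∃ M : ℝ, ∀ r : ℝ, M < r →
        ∀ t ∈ Set.Icc (lam * r) r, ∀ τ ∈ Set.Icc (lam * r) r,
          ‖(t : ℂ) * φ' t - (τ : ℂ) * φ' τ‖ < ε) :
    Filter.Tendsto (fun t : ℝ => (t : ℂ) * φ' t) Filter.atTop (nhds 0) :=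
  stmt_17_general lam hlam φ φ' hd hφso hψso
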